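/- arXiv:2309.13530 — 2 statements merged into one kernel-verified Lean document; each statement's English description precedes it below -/
import Mathlib

section
/- Let (a_n)_{n≥0} be a sequence of nonzero complex numbers satisfying |a_0| ≥ |a_1| ≥ |a_2| ≥ ⋯ and ∑_{n=0}^∞ |a_n|² = M² < ∞, and let T be the corresponding weighted shift. Then for every S ∈ A_T, ‖S e_0‖ ≤ ‖S‖ ≤ (M/|a_0|) ‖S e_0‖; in particular the operator norm on A_T is equivalent to the norm S ↦ ‖S e_0‖. -/
/-!
Write `S = ∑ c_k T^(k+1)` for a polynomial in `T`. Then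
`S e_n = ∑ c_k a_n a_(n+1) ⋯ a_(n+k) e_(n+k+1)`, and since the weights decrease,
`|a_n ⋯ a_(n+k)| |a_0| ≤ |a_0 ⋯ a_k| |a_n|`; comparing coefficients in the orthonormal
expansions gives `‖S e_n‖ |a_0| ≤ ‖S e_0‖ |a_n|`. Summing squares, the Hilbert–Schmidt norm of
`S` is at most `(M / |a_0|) ‖S e_0‖`, and it dominates the operator norm. Both sides of the
resulting inequality are continuous in `S`, so it passes to the closure `A_T`.
-/

noncomputable section

/-- `H = ℓ²(ℕ)` over `ℂ`. -/
abbrev H : Type := lp (fun _ : ℕ => ℂ) 2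

/-- The standard orthonormal basis of `ℓ²(ℕ)`. -/
def e (n : ℕ) : H := lp.single 2 n 1

/-- `A_T`: the operator-norm closure of the polynomials in `T` with zero constant term. -/
def polyAlg (T : H →L[ℂ] H) : Set (H →L[ℂ] H) :=
  closure ((NonUnitalAlgebra.adjoin ℂ {T} : NonUnitalSubalgebra ℂ (H →L[ℂ] H)) :
    Set (H →L[ℂ] H))

namespace HilbertBasis

variable {ι 𝕜 E F : Type*} [RCLike 𝕜] [NormedAddCommGroup E] [InnerProductSpace 𝕜 E]
  [SeminormedAddCommGroup F] [NormedSpace 𝕜 F]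

theorem hasSum_norm_repr_sq (b : HilbertBasis ι 𝕜 E) (x : E) :
    HasSum (fun i => ‖b.repr x i‖ ^ 2) (‖x‖ ^ 2) := by
  simpa [Real.rpow_two] using lp.hasSum_norm (p := 2) (by norm_num) (b.repr x)

theorem opNorm_le_of_norm_apply_le (b : HilbertBasis ι 𝕜 E) (S : E →L[𝕜] F) {β : ι → ℝ}
    {B : ℝ} (hB : 0 ≤ B) (hβ : HasSum (fun i => β i ^ 2) (B ^ 2))
    (hS : ∀ i, ‖S (b i)‖ ≤ β i) : ‖S‖ ≤ B := by
  refine S.opNorm_le_bound hB fun x => ?_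
  have hβ_nonneg i : 0 ≤ β i := (norm_nonneg _).trans (hS i)
  obtain ⟨C, -, hC, hsum⟩ := Real.inner_le_Lp_mul_Lq_hasSum_of_nonneg .two_two (norm_nonneg x) hB
    (fun i => norm_nonneg (b.repr x i)) hβ_nonneg
    (by simpa [Real.rpow_two] using b.hasSum_norm_repr_sq x) (by simpa [Real.rpow_two] using hβ)
  have hSx : HasSum (fun i => b.repr x i • S (b i)) (S x) := by
    simpa using (b.hasSum_repr x).mapL S
  calc ‖S x‖ ≤ C := hSx.norm_le_of_bounded hsum fun i => by
        rw [norm_smul]; exact mul_le_mul_of_nonneg_left (hS i) (norm_nonneg _)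
    _ ≤ B * ‖x‖ := by linarith

end HilbertBasis

theorem Orthonormal.norm_sum_smul_sq {ι 𝕜 E : Type*} [RCLike 𝕜] [NormedAddCommGroup E]
    [InnerProductSpace 𝕜 E] {v : ι → E} (hv : Orthonormal 𝕜 v) (s : Finset ι) (l : ι → 𝕜) :
    ‖∑ i ∈ s, l i • v i‖ ^ 2 = ∑ i ∈ s, ‖l i‖ ^ 2 := by
  rw [← RCLike.ofReal_inj (K := 𝕜), RCLike.ofReal_pow, ← inner_self_eq_norm_sq_to_K,
    hv.inner_sum]
  push_cast
  exact Finset.sum_congr rfl fun i _ => RCLike.conj_mul (l i)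

theorem NonUnitalAlgebra.exists_finsupp_of_mem_adjoin_singleton {R A : Type*} [CommSemiring R]
    [Semiring A] [Algebra R A] {x y : A} (hy : y ∈ NonUnitalAlgebra.adjoin R {x}) :
    ∃ c : ℕ →₀ R, (c.sum fun k r => r • x ^ (k + 1)) = y := by
  have hclosure : (Subsemigroup.closure {x} : Set A) ⊆ Set.range fun k : ℕ => x ^ (k + 1) := by
    intro z hz
    induction hz using Subsemigroup.closure_induction with
    | mem z hz => exact ⟨0, by simp_all⟩
    | mul z w _ _ hz hw =>
      obtain ⟨i, rfl⟩ := hz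
      obtain ⟨j, rfl⟩ := hw
      exact ⟨i + j + 1, by rw [← pow_add]; ring_nf⟩
  have hy' : y ∈ (NonUnitalAlgebra.adjoin R {x}).toSubmodule := hy
  rw [NonUnitalAlgebra.adjoin_eq_span] at hy'
  exact Finsupp.mem_span_range_iff_exists_finsupp.mp (Submodule.span_mono hclosure hy')

def stdBasis : HilbertBasis ℕ ℂ H := HilbertBasis.ofRepr (LinearIsometryEquiv.refl ℂ H)

@[simp]
theorem coe_stdBasis : ⇑stdBasis = e := by
  classical
  funext n
  rw [← stdBasis.repr_symm_single]
  rfl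

theorem orthonormal_e : Orthonormal ℂ e := coe_stdBasis ▸ stdBasis.orthonormal

theorem norm_e (n : ℕ) : ‖e n‖ = 1 := orthonormal_e.1 n

def weightProd (a : ℕ → ℂ) (n k : ℕ) : ℂ := ∏ j ∈ Finset.range k, a (n + j)

theorem weightProd_succ (a : ℕ → ℂ) (n k : ℕ) :
    weightProd a n (k + 1) = a n * weightProd a (n + 1) k := by
  simp only [weightProd, Finset.prod_range_succ', add_zero, add_right_comm _ 1, add_assoc,
    mul_comm]

theorem norm_weightProd_succ_mul_le {a : ℕ → ℂ} (hdec : ∀ n, ‖a (n + 1)‖ ≤ ‖a n‖) (n k : ℕ) :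
    ‖weightProd a n (k + 1)‖ * ‖a 0‖ ≤ ‖weightProd a 0 (k + 1)‖ * ‖a n‖ := by
  have htail : ‖weightProd a (n + 1) k‖ ≤ ‖weightProd a 1 k‖ := by
    simp only [weightProd, norm_prod]
    exact Finset.prod_le_prod (fun _ _ => norm_nonneg _) fun j _ =>
      antitone_nat_of_succ_le (f := fun m => ‖a m‖) hdec (by omega)
  rw [weightProd_succ, weightProd_succ, norm_mul, norm_mul]
  calc ‖a n‖ * ‖weightProd a (n + 1) k‖ * ‖a 0‖
      ≤ ‖a n‖ * ‖weightProd a 1 k‖ * ‖a 0‖ := by gcongr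
    _ = ‖a 0‖ * ‖weightProd a (0 + 1) k‖ * ‖a n‖ := by ring_nf

section WeightedShift

variable {a : ℕ → ℂ} {T : H →L[ℂ] H} (hT : ∀ n, T (e n) = a n • e (n + 1))
include hT

theorem pow_apply_e (k n : ℕ) : (T ^ k) (e n) = weightProd a n k • e (n + k) := by
  induction k generalizing n with
  | zero => simp [weightProd]
  | succ k ih =>
    rw [pow_succ, mul_apply_eq_comp, hT n, map_smul, ih, smul_smul, ← weightProd_succ,
      add_right_comm, add_assoc]

theorem norm_sum_smul_pow_apply_e_sq (c : ℕ →₀ ℂ) (n : ℕ) :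
    ‖(c.sum fun k z => z • T ^ (k + 1)) (e n)‖ ^ 2
      = ∑ k ∈ c.support, ‖c k‖ ^ 2 * ‖weightProd a n (k + 1)‖ ^ 2 := by
  have hv : Orthonormal ℂ fun k => e (n + (k + 1)) :=
    orthonormal_e.comp _ fun i j h => by omega
  have happly : (c.sum fun k z => z • T ^ (k + 1)) (e n)
      = ∑ k ∈ c.support, (c k * weightProd a n (k + 1)) • e (n + (k + 1)) := by
    simp only [Finsupp.sum, sum_apply, smul_apply, pow_apply_e hT, smul_smul]
  simp only [happly, hv.norm_sum_smul_sq, norm_mul, mul_pow]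

theorem norm_sum_smul_pow_apply_e_mul_le (hdec : ∀ n, ‖a (n + 1)‖ ≤ ‖a n‖) (c : ℕ →₀ ℂ)
    (n : ℕ) :
    ‖(c.sum fun k z => z • T ^ (k + 1)) (e n)‖ * ‖a 0‖
      ≤ ‖(c.sum fun k z => z • T ^ (k + 1)) (e 0)‖ * ‖a n‖ := by
  refine (pow_le_pow_iff_left₀ (by positivity) (by positivity) two_ne_zero).mp ?_
  rw [mul_pow, mul_pow, norm_sum_smul_pow_apply_e_sq hT, norm_sum_smul_pow_apply_e_sq hT]
  simp only [Finset.sum_mul, mul_assoc, ← mul_pow]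
  refine Finset.sum_le_sum fun k _ => ?_
  gcongr (‖c k‖ * ?_) ^ 2
  exact norm_weightProd_succ_mul_le hdec n k

theorem norm_sum_smul_pow_le (ha₀ : a 0 ≠ 0) (hdec : ∀ n, ‖a (n + 1)‖ ≤ ‖a n‖) {M : ℝ}
    (hM : 0 ≤ M) (hsum : HasSum (fun n => ‖a n‖ ^ 2) (M ^ 2)) (c : ℕ →₀ ℂ) :
    ‖c.sum fun k z => z • T ^ (k + 1)‖
      ≤ M / ‖a 0‖ * ‖(c.sum fun k z => z • T ^ (k + 1)) (e 0)‖ := by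
  set r := ‖(c.sum fun k z => z • T ^ (k + 1)) (e 0)‖ / ‖a 0‖
  have hS : ‖c.sum fun k z => z • T ^ (k + 1)‖ ≤ r * M := by
    refine stdBasis.opNorm_le_of_norm_apply_le _ (β := fun n => r * ‖a n‖)
      (mul_nonneg (by positivity) hM) (by simpa only [mul_pow] using hsum.mul_left (r ^ 2))
      fun n => ?_
    rw [coe_stdBasis, div_mul_eq_mul_div, le_div_iff₀ (norm_pos_iff.mpr ha₀)]
    exact norm_sum_smul_pow_apply_e_mul_le hT hdec c n
  exact hS.trans_eq (by ring)

end WeightedShift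

/-- For a weighted shift with nonzero weights satisfying `|a_0| ≥ |a_1| ≥ ⋯` and
`∑ |a_n|² = M² < ∞`, the operator norm on `A_T` is equivalent to `S ↦ ‖S e_0‖`:
`‖S e_0‖ ≤ ‖S‖ ≤ (M / |a_0|) ‖S e_0‖` for every `S ∈ A_T`. -/
theorem equivalent_norms (a : ℕ → ℂ) (ha : ∀ n, a n ≠ 0)
    (hdec : ∀ n, ‖a (n + 1)‖ ≤ ‖a n‖)
    (M : ℝ) (hM : 0 ≤ M) (hsum : HasSum (fun n => ‖a n‖ ^ 2) (M ^ 2))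
    (T : H →L[ℂ] H) (hT : ∀ n, T (e n) = a n • e (n + 1)) :
    ∀ S ∈ polyAlg T, ‖S (e 0)‖ ≤ ‖S‖ ∧ ‖S‖ ≤ (M / ‖a 0‖) * ‖S (e 0)‖ := by
  intro S hS
  refine ⟨by simpa [norm_e] using S.le_opNorm (e 0), ?_⟩
  refine closure_minimal (fun S' hS' => ?_) (isClosed_le continuous_norm
    (continuous_const.mul (ContinuousLinearMap.apply ℂ H (e 0)).continuous.norm)) hS
  obtain ⟨c, rfl⟩ := NonUnitalAlgebra.exists_finsupp_of_mem_adjoin_singleton hS'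
  exact norm_sum_smul_pow_le hT (ha 0) hdec hM hsum c
end
end

section
/- Let T be a weighted shift with nonzero weight sequence (a_n)_{n≥0}. Then A_T is an integral domain (without unit): if R, S ∈ A_T are both nonzero, then RS ≠ 0. In particular, if T is quasinilpotent, then every nonzero element S of A_T is quasinilpotent but not nilpotent, i.e., S has spectral radius 0 and S^n ≠ 0 for every n ≥ 1. -/
/-!
An operator `R` commuting with the weighted shift `T` is determined by its first column:
`T ^ n (R e₀) = R (T ^ n e₀)` is a nonzero multiple of `R eₙ`. Since `T` raises the index of the
first nonzero coordinate by exactly one, `R eₙ` starts at index `q + n` when `R e₀` starts at `q`,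
so `R x` starts at index `q + p` when `x` starts at `p`, as for the order of a product of power
series. Hence every nonzero operator commuting with `T`, in particular every nonzero element of
`A_T`, is injective.

For quasinilpotence, pass to the closed unital algebra generated by `T`, which is a commutative
Banach algebra in which `T` still has spectral radius `0` (Gelfand's formula). Every character
kills `T`, hence the non-unital polynomials in `T`, hence by continuity all of `A_T`; so the
spectrum of every element of `A_T` is `{0}`.
-/

noncomputable section

open WeakDual

section Quasinilpotent

variable {A : Type*} [NormedRing A] [NormedAlgebra ℂ A] [CompleteSpace A]

lemma Subalgebra.spectralRadius_coe (B : Subalgebra ℂ A) [CompleteSpace B] (x : B) :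
    spectralRadius ℂ (x : A) = spectralRadius ℂ x :=
  tendsto_nhds_unique (spectrum.pow_nnnorm_pow_one_div_tendsto_nhds_spectralRadius (x : A))
    (spectrum.pow_nnnorm_pow_one_div_tendsto_nhds_spectralRadius x)

instance (x : A) : NormedCommRing (Algebra.elemental ℂ x) :=
  { (Algebra.elemental ℂ x).normedRing with mul_comm := mul_comm }

lemma spectralRadius_eq_zero_iff_forall_character {B : Type*} [NormedCommRing B]
    [NormedAlgebra ℂ B] [CompleteSpace B] {x : B} :
    spectralRadius ℂ x = 0 ↔ ∀ φ : characterSpace ℂ B, φ x = 0 := by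
  simp only [spectralRadius, ENNReal.iSup_eq_zero, ENNReal.coe_eq_zero, nnnorm_eq_zero,
    CharacterSpace.mem_spectrum_iff_exists]
  exact ⟨fun h φ => h _ ⟨φ, rfl⟩, fun h _ ⟨φ, hφ⟩ => hφ ▸ h φ⟩

theorem spectralRadius_eq_zero_of_mem_closure_adjoin {x y : A} (hx : spectralRadius ℂ x = 0)
    (hy : y ∈ closure (NonUnitalAlgebra.adjoin ℂ {x} : Set A)) : spectralRadius ℂ y = 0 := by
  set B := Algebra.elemental ℂ x
  have hxB : x ∈ B := Algebra.elemental.self_mem ℂ x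
  have hadj : (NonUnitalAlgebra.adjoin ℂ {x} : Set A) ⊆ B :=
    NonUnitalAlgebra.adjoin_le (S := B.toNonUnitalSubalgebra) (by simpa using hxB)
  have hyB : y ∈ B := closure_minimal hadj (Algebra.elemental.isClosed ℂ x) hy
  rw [show y = ((⟨y, hyB⟩ : B) : A) from rfl, Subalgebra.spectralRadius_coe,
    spectralRadius_eq_zero_iff_forall_character]
  intro φ
  have hφx : φ ⟨x, hxB⟩ = 0 := by
    refine spectralRadius_eq_zero_iff_forall_character.mp ?_ φ
    rwa [← Subalgebra.spectralRadius_coe]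
  have hker : IsClosed (((↑) : B → A) '' (φ ⁻¹' {0})) :=
    (Algebra.elemental.isClosedEmbedding_coe ℂ x).isClosedMap _
      (isClosed_singleton.preimage (map_continuous φ))
  have hsub : (NonUnitalAlgebra.adjoin ℂ {x} : Set A) ⊆ ((↑) : B → A) '' (φ ⁻¹' {0}) := by
    intro z hz
    induction hz using NonUnitalAlgebra.adjoin_induction with
    | mem z hz => exact ⟨⟨x, hxB⟩, hφx, (Set.mem_singleton_iff.mp hz).symm⟩
    | zero => exact ⟨0, map_zero φ, rfl⟩
    | add z₁ z₂ _ _ h₁ h₂ =>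
      obtain ⟨⟨w₁, hw₁, rfl⟩, ⟨w₂, hw₂, rfl⟩⟩ := And.intro h₁ h₂
      exact ⟨w₁ + w₂, by simp_all [map_add], rfl⟩
    | mul z₁ z₂ _ _ h₁ h₂ =>
      obtain ⟨⟨w₁, hw₁, rfl⟩, ⟨w₂, hw₂, rfl⟩⟩ := And.intro h₁ h₂
      exact ⟨w₁ * w₂, by simp_all [map_mul], rfl⟩
    | smul c z _ h =>
      obtain ⟨w, hw, rfl⟩ := h
      exact ⟨c • w, by simp_all [map_smul], rfl⟩
  obtain ⟨w, hw, rfl⟩ := closure_minimal hsub hker hy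
  exact hw

end Quasinilpotent

lemma ContinuousLinearMap.mul_ne_zero_of_injective {R M : Type*} [Semiring R]
    [TopologicalSpace M] [AddCommMonoid M] [Module R M] {f g : M →L[R] M}
    (hf : Function.Injective f) (hg : g ≠ 0) : f * g ≠ 0 := by
  obtain ⟨x, hx⟩ := DFunLike.ne_iff.mp hg
  exact fun h => hx (hf (by simpa using DFunLike.congr_fun h x))

lemma e_apply (n m : ℕ) : e n m = if m = n then 1 else 0 := by
  simp [e, lp.single_apply, Pi.single_apply]

lemma apply_apply_eq_tsum (R : H →L[ℂ] H) (x : H) (m : ℕ) :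
    R x m = ∑' j, x j * R (e j) m := by
  have hx : HasSum (fun j => x j • e j) x := by
    simpa [e, ← lp.single_smul] using
      lp.hasSum_single (E := fun _ : ℕ => ℂ) ENNReal.ofNat_ne_top x
  exact ((hx.mapL R).mapL (lp.evalCLM ℂ _ 2 m)).tsum_eq.symm.trans (by simp [lp.evalCLM])

lemma ext_e {R S : H →L[ℂ] H} (h : ∀ n, R (e n) = S (e n)) : R = S := by
  refine ContinuousLinearMap.ext fun x => lp.ext (funext fun m => ?_)
  rw [apply_apply_eq_tsum, apply_apply_eq_tsum]
  simp only [h]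

lemma pow_apply_apply_of_commute {T R : H →L[ℂ] H} (h : Commute T R) (n : ℕ) (x : H) :
    (T ^ n) (R x) = R ((T ^ n) x) :=
  DFunLike.congr_fun (h.pow_left n).eq x

lemma commute_of_mem_polyAlg {T R : H →L[ℂ] H} (hR : R ∈ polyAlg T) : Commute T R :=
  NonUnitalAlgebra.elemental.le_centralizer_centralizer ℂ T hR T
    fun _ hg => by rw [Set.mem_singleton_iff.mp hg]

def HasLeadingIndex (x : H) (q : ℕ) : Prop := (∀ m < q, x m = 0) ∧ x q ≠ 0

lemma exists_hasLeadingIndex {x : H} (hx : x ≠ 0) : ∃ q, HasLeadingIndex x q := by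
  classical
  have h : ∃ m, x m ≠ 0 := by
    by_contra! h
    exact hx (lp.ext (funext h))
  exact ⟨Nat.find h, fun m hm => not_not.mp (Nat.find_min h hm), Nat.find_spec h⟩

lemma hasLeadingIndex_smul_iff {x : H} {q : ℕ} {c : ℂ} (hc : c ≠ 0) :
    HasLeadingIndex (c • x) q ↔ HasLeadingIndex x q := by
  simp [HasLeadingIndex, hc]

def IsWeightedShift (a : ℕ → ℂ) (T : H →L[ℂ] H) : Prop := ∀ n, T (e n) = a n • e (n + 1)

namespace IsWeightedShift

variable {a : ℕ → ℂ} {T : H →L[ℂ] H}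

lemma apply_zero (hT : IsWeightedShift a T) (x : H) : T x 0 = 0 := by
  simp [apply_apply_eq_tsum, hT _, e_apply]

lemma apply_succ (hT : IsWeightedShift a T) (x : H) (m : ℕ) : T x (m + 1) = a m * x m := by
  rw [apply_apply_eq_tsum, tsum_eq_single m]
  · simp [hT _, e_apply, mul_comm]
  · intro j hj
    simp [hT _, e_apply, hj.symm]

lemma hasLeadingIndex_apply_succ (ha : ∀ n, a n ≠ 0) (hT : IsWeightedShift a T) {x : H}
    {q : ℕ} (hx : HasLeadingIndex x q) : HasLeadingIndex (T x) (q + 1) := by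
  refine ⟨fun m hm => ?_, by simp [hT.apply_succ, ha, hx.2]⟩
  cases m with
  | zero => exact hT.apply_zero x
  | succ m => simp [hT.apply_succ, hx.1 m (by omega)]

lemma hasLeadingIndex_pow_apply (ha : ∀ n, a n ≠ 0) (hT : IsWeightedShift a T) {x : H}
    {q : ℕ} (hx : HasLeadingIndex x q) (n : ℕ) : HasLeadingIndex ((T ^ n) x) (q + n) := by
  induction n with
  | zero => simpa using hx
  | succ n ih => simpa [pow_succ', ← add_assoc] using hT.hasLeadingIndex_apply_succ ha ih

lemma exists_pow_apply_e_zero (ha : ∀ n, a n ≠ 0) (hT : IsWeightedShift a T) (n : ℕ) :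
    ∃ c : ℂ, c ≠ 0 ∧ (T ^ n) (e 0) = c • e n := by
  induction n with
  | zero => exact ⟨1, one_ne_zero, by simp⟩
  | succ n ih =>
    obtain ⟨c, hc, h⟩ := ih
    refine ⟨a n * c, mul_ne_zero (ha n) hc, ?_⟩
    rw [pow_succ']
    change T ((T ^ n) (e 0)) = _
    rw [h, map_smul, hT n, smul_smul, mul_comm]

lemma hasLeadingIndex_apply_e_of_commute (ha : ∀ n, a n ≠ 0) (hT : IsWeightedShift a T)
    {R : H →L[ℂ] H} (hR : Commute T R) {q : ℕ} (hq : HasLeadingIndex (R (e 0)) q) (n : ℕ) :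
    HasLeadingIndex (R (e n)) (q + n) := by
  obtain ⟨c, hc, h⟩ := hT.exists_pow_apply_e_zero ha n
  rw [← hasLeadingIndex_smul_iff hc, ← map_smul, ← h, ← pow_apply_apply_of_commute hR]
  exact hT.hasLeadingIndex_pow_apply ha hq n

lemma hasLeadingIndex_apply_of_commute (ha : ∀ n, a n ≠ 0) (hT : IsWeightedShift a T)
    {R : H →L[ℂ] H} (hR : Commute T R) {q : ℕ} (hq : HasLeadingIndex (R (e 0)) q)
    {x : H} {p : ℕ} (hx : HasLeadingIndex x p) : HasLeadingIndex (R x) (q + p) := by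
  have hcol := hT.hasLeadingIndex_apply_e_of_commute ha hR hq
  refine ⟨fun m hm => ?_, ?_⟩
  · rw [apply_apply_eq_tsum, ← tsum_zero]
    refine tsum_congr fun j => ?_
    rcases lt_or_ge j p with hj | hj
    · rw [hx.1 j hj, zero_mul]
    · rw [(hcol j).1 m (by omega), mul_zero]
  · rw [apply_apply_eq_tsum, tsum_eq_single p]
    · exact mul_ne_zero hx.2 (hcol p).2
    · intro j hj
      rcases lt_or_gt_of_ne hj with hj | hj
      · rw [hx.1 j hj, zero_mul]
      · rw [(hcol j).1 (q + p) (by omega), mul_zero]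

lemma apply_e_zero_ne_zero_of_commute (ha : ∀ n, a n ≠ 0) (hT : IsWeightedShift a T)
    {R : H →L[ℂ] H} (hR : Commute T R) (h0 : R ≠ 0) : R (e 0) ≠ 0 := by
  refine fun h => h0 (ext_e fun n => ?_)
  obtain ⟨c, hc, hn⟩ := hT.exists_pow_apply_e_zero ha n
  have : c • R (e n) = 0 := by
    rw [← map_smul, ← hn, ← pow_apply_apply_of_commute hR, h, map_zero]
  simpa [hc] using this

theorem injective_of_commute (ha : ∀ n, a n ≠ 0) (hT : IsWeightedShift a T)
    {R : H →L[ℂ] H} (hR : Commute T R) (h0 : R ≠ 0) : Function.Injective R := by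
  obtain ⟨q, hq⟩ := exists_hasLeadingIndex (hT.apply_e_zero_ne_zero_of_commute ha hR h0)
  refine (injective_iff_map_eq_zero R).mpr fun x hx => by_contra fun hx0 => ?_
  obtain ⟨p, hp⟩ := exists_hasLeadingIndex hx0
  exact (hT.hasLeadingIndex_apply_of_commute ha hR hq hp).2 (by simp [hx])

end IsWeightedShift

/-- For a weighted shift `T` with nonzero weights, `A_T` is a (non-unital) integral
domain: nonzero elements have nonzero product. In particular, if `T` is quasinilpotent,
then every nonzero `S ∈ A_T` is quasinilpotent but not nilpotent. -/
theorem polyAlg_integral_domain (a : ℕ → ℂ) (ha : ∀ n, a n ≠ 0)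
    (T : H →L[ℂ] H) (hT : ∀ n, T (e n) = a n • e (n + 1)) :
    (∀ R ∈ polyAlg T, ∀ S ∈ polyAlg T, R ≠ 0 → S ≠ 0 → R * S ≠ 0) ∧
    (spectralRadius ℂ T = 0 →
      ∀ S ∈ polyAlg T, S ≠ 0 →
        spectralRadius ℂ S = 0 ∧ ∀ n : ℕ, 1 ≤ n → S ^ n ≠ 0) := by
  have hinj : ∀ R ∈ polyAlg T, R ≠ 0 → Function.Injective R := fun R hR h0 =>
    IsWeightedShift.injective_of_commute ha hT (commute_of_mem_polyAlg hR) h0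
  refine ⟨fun R hR S _ hR0 hS0 => ?_, fun hTq S hS hS0 => ⟨?_, fun n hn => ?_⟩⟩
  · exact ContinuousLinearMap.mul_ne_zero_of_injective (hinj R hR hR0) hS0
  · exact spectralRadius_eq_zero_of_mem_closure_adjoin hTq hS
  · induction n, hn using Nat.le_induction with
    | base => rwa [pow_one]
    | succ n _ ih =>
      rw [pow_succ']
      exact ContinuousLinearMap.mul_ne_zero_of_injective (hinj S hS hS0) ih
end
end
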